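/- arXiv:2404.07126 — 5 statements merged into one kernel-verified Lean document; each statement's English description precedes it below -/
import Mathlib

section
/- Let (α_k)_{k∈ℕ} be a sequence of nonnegative reals. If there exists C > 0 such that for all M, N ∈ ℕ one has ∑_{k=M+1}^{M+N} α_k ≤ C·α_M, then there exist C' > 0 and q ∈ (0,1) such that α_{M+N} ≤ C'·q^N·α_M for all M, N ∈ ℕ. Specifically, one can take q = (C⁻¹+1)⁻¹ and C' = C+1. -/
open Finset

/-! The tails `T M = ∑_{k > M} α k` satisfy `T M ≤ C α M` and `T M = α (M + 1) + T (M + 1)`, hence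
`(C + 1) T (M + 1) ≤ C T M`: the tails decay geometrically with ratio `q = C / (C + 1) = (C⁻¹ + 1)⁻¹`.
Therefore `α (M + N + 1) ≤ T (M + N) ≤ q ^ N C α M = (C + 1) q ^ (N + 1) α M`. -/

/-- The tail `∑_{k > M} α k`. -/
noncomputable def tailSum (α : ℕ → ℝ) (M : ℕ) : ℝ := ∑' k, α (k + (M + 1))

theorem sum_range_shift_eq_sum_Icc (α : ℕ → ℝ) (M n : ℕ) :
    ∑ k ∈ range n, α (k + (M + 1)) = ∑ k ∈ Icc (M + 1) (M + n), α k := by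
  rw [range_eq_Ico, sum_Ico_add' (fun k ↦ α k) 0 n (M + 1), ← Ico_add_one_right_eq_Icc]
  congr 2 <;> omega

theorem tailSum_eq_add_tailSum_succ {α : ℕ → ℝ} {M : ℕ} (hα : Summable fun k ↦ α (k + (M + 1))) :
    tailSum α M = α (M + 1) + tailSum α (M + 1) := by
  rw [tailSum, hα.tsum_eq_zero_add, tailSum]
  congr 1
  · simp
  · congr 1; ext k; congr 1; omega

section TailBound

variable {α : ℕ → ℝ} {C : ℝ}
  (h : ∀ M N : ℕ, ∑ k ∈ Icc (M + 1) (M + N), α k ≤ C * α M)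
include h

theorem nonneg_of_sum_Icc_le (hC : 0 < C) (M : ℕ) : 0 ≤ α M :=
  nonneg_of_mul_nonneg_right (by simpa using h M 0) hC

theorem summable_tail_of_sum_Icc_le (hC : 0 < C) (M : ℕ) : Summable fun k ↦ α (k + (M + 1)) :=
  summable_of_sum_range_le (fun _ ↦ nonneg_of_sum_Icc_le h hC _)
    fun n ↦ (sum_range_shift_eq_sum_Icc α M n).trans_le (h M n)

theorem tailSum_le_of_sum_Icc_le (hC : 0 < C) (M : ℕ) : tailSum α M ≤ C * α M :=
  Real.tsum_le_of_sum_range_le (fun _ ↦ nonneg_of_sum_Icc_le h hC _)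
    fun n ↦ (sum_range_shift_eq_sum_Icc α M n).trans_le (h M n)

theorem le_tailSum_of_sum_Icc_le (hC : 0 < C) (M : ℕ) : α (M + 1) ≤ tailSum α M := by
  rw [tailSum_eq_add_tailSum_succ (summable_tail_of_sum_Icc_le h hC M)]
  exact le_add_of_nonneg_right (tsum_nonneg fun k ↦ nonneg_of_sum_Icc_le h hC _)

theorem tailSum_succ_le_of_sum_Icc_le (hC : 0 < C) (M : ℕ) :
    tailSum α (M + 1) ≤ C / (C + 1) * tailSum α M := by
  rw [div_mul_eq_mul_div, le_div_iff₀ (by linarith),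
    tailSum_eq_add_tailSum_succ (summable_tail_of_sum_Icc_le h hC M)]
  linarith [tailSum_le_of_sum_Icc_le h hC (M + 1)]

theorem tailSum_le_geom_of_sum_Icc_le (hC : 0 < C) (M n : ℕ) :
    tailSum α (M + n) ≤ (C / (C + 1)) ^ n * (C * α M) :=
  (le_geom (u := fun n ↦ tailSum α (M + n)) (by positivity) n
    fun k _ ↦ tailSum_succ_le_of_sum_Icc_le h hC (M + k)).trans
    (by gcongr; exact tailSum_le_of_sum_Icc_le h hC M)

end TailBound

theorem tail_summability_implies_R_linear_general
    (α : ℕ → ℝ) (C : ℝ) (hC : 0 < C)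
    (h : ∀ M N : ℕ, ∑ k ∈ Finset.Icc (M + 1) (M + N), α k ≤ C * α M) :
    (0 : ℝ) < (C⁻¹ + 1)⁻¹ ∧ (C⁻¹ + 1)⁻¹ < 1 ∧ (0 : ℝ) < C + 1 ∧
      ∀ M N : ℕ, α (M + N) ≤ (C + 1) * ((C⁻¹ + 1)⁻¹) ^ N * α M := by
  have hq : (C⁻¹ + 1)⁻¹ = C / (C + 1) := by field_simp; ring
  rw [hq]
  refine ⟨by positivity, (div_lt_one (by positivity)).2 (by linarith), by positivity, ?_⟩
  rintro M (_ | N)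
  · have hαM := nonneg_of_sum_Icc_le h hC M
    simp only [add_zero, pow_zero, mul_one]
    nlinarith
  · calc α (M + (N + 1)) ≤ tailSum α (M + N) := le_tailSum_of_sum_Icc_le h hC (M + N)
      _ ≤ (C / (C + 1)) ^ N * (C * α M) := tailSum_le_geom_of_sum_Icc_le h hC M N
      _ = (C + 1) * (C / (C + 1)) ^ (N + 1) * α M := by rw [pow_succ]; field_simp

/-- Tail summability implies R-linear convergence, with explicit constants
`q = (C⁻¹ + 1)⁻¹` and `C' = C + 1`. -/
theorem tail_summability_implies_R_linear
    (α : ℕ → ℝ) (hα : ∀ k, 0 ≤ α k) (C : ℝ) (hC : 0 < C)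
    (h : ∀ M N : ℕ, ∑ k ∈ Finset.Icc (M + 1) (M + N), α k ≤ C * α M) :
    (0 : ℝ) < (C⁻¹ + 1)⁻¹ ∧ (C⁻¹ + 1)⁻¹ < 1 ∧ (0 : ℝ) < C + 1 ∧
      ∀ M N : ℕ, α (M + N) ≤ (C + 1) * ((C⁻¹ + 1)⁻¹) ^ N * α M :=
  tail_summability_implies_R_linear_general α C hC h
end

section
/- Suppose nonnegative reals η_H, η_refined, η_unrefined, and parameters 0 < q_red < 1, 0 < θ ≤ 1 satisfy: η_H² = η_unrefined² + η_old_refined² (splitting of the estimator over unrefined and refined elements), the Dörfler marking θ·η_H² ≤ η_old_refined², and the reduction η_refined² ≤ q_red²·η_old_refined². Then the new estimator η_h with η_h² = η_unrefined² + η_refined² satisfies η_h² ≤ (1 - (1 - q_red²)·θ)·η_H², and in particular η_h ≤ q_θ·η_H with q_θ = (1 - (1-q_red²)θ)^{1/2} < 1. -/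
/-- Estimator reduction under Dörfler marking. -/
theorem estimator_reduction
    (ηH ηh ηref ηunref ηoldref qred θ : ℝ)
    (hηH : 0 ≤ ηH) (hηh : 0 ≤ ηh) (hηref : 0 ≤ ηref)
    (hηunref : 0 ≤ ηunref) (hηoldref : 0 ≤ ηoldref)
    (hqred0 : 0 < qred) (hqred1 : qred < 1)
    (hθ0 : 0 < θ) (hθ1 : θ ≤ 1)
    (hsplit : ηH ^ 2 = ηunref ^ 2 + ηoldref ^ 2)
    (hdoerfler : θ * ηH ^ 2 ≤ ηoldref ^ 2)
    (hred : ηref ^ 2 ≤ qred ^ 2 * ηoldref ^ 2)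
    (hnew : ηh ^ 2 = ηunref ^ 2 + ηref ^ 2) :
    ηh ^ 2 ≤ (1 - (1 - qred ^ 2) * θ) * ηH ^ 2 ∧
    ηh ≤ Real.sqrt (1 - (1 - qred ^ 2) * θ) * ηH ∧
    Real.sqrt (1 - (1 - qred ^ 2) * θ) < 1 := by
  have hq2 : qred ^ 2 < 1 := by nlinarith
  have hmain : ηh ^ 2 ≤ (1 - (1 - qred ^ 2) * θ) * ηH ^ 2 := by nlinarith
  refine ⟨hmain, ?_, ?_⟩
  · have := Real.sqrt_le_sqrt hmain
    rw [Real.sqrt_sq hηh] at this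
    calc ηh ≤ Real.sqrt ((1 - (1 - qred ^ 2) * θ) * ηH ^ 2) := this
      _ = Real.sqrt (1 - (1 - qred ^ 2) * θ) * ηH := by
          rw [Real.sqrt_mul (by nlinarith), Real.sqrt_sq hηH]
  · have h1 : 1 - (1 - qred ^ 2) * θ < 1 := by nlinarith
    calc Real.sqrt (1 - (1 - qred ^ 2) * θ) < Real.sqrt 1 := by
          exact Real.sqrt_lt_sqrt (by nlinarith) h1
      _ = 1 := Real.sqrt_one
end

section
/- Let C_lin > 0 and 0 < q_lin < 1, and let s > 0. Let (η_n)_{n∈ℕ} be positive reals satisfying η_n ≤ C_lin·q_lin^{n-m}·η_m for all m ≤ n (full R-linear convergence), and let (T_n)_{n∈ℕ} be positive reals with definitions M(s) = sup_n T_n^s·η_n and cost(n) = ∑_{m ≤ n} T_m. Then M(s) ≤ sup_n cost(n)^s·η_n ≤ (C_lin/(1 - q_lin^{1/s})^s)·M(s). -/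
open scoped ENNReal

/-!
If `T m ^ s * η m ≤ M` for all `m ≤ n`, full R-linear convergence `η n ≤ C q ^ (n - m) η m` gives
`T m ≤ (C M / η n) ^ (1 / s) * (q ^ (1 / s)) ^ (n - m)`: the mesh sizes up to step `n` are dominated
by a geometric sequence with ratio `q ^ (1 / s)` ending at step `n`, so the cumulative cost
`∑_{m ≤ n} T m` is at most `(C M / η n) ^ (1 / s) / (1 - q ^ (1 / s))`. Taking for `M` the largest
`T m ^ s * η m` with `m ≤ n` keeps the argument in `ℝ` even when the supremum is infinite.
-/

open Finset

lemma sum_range_succ_le_div_one_sub_of_le_mul_pow {x : ℕ → ℝ} {a r : ℝ} (ha : 0 ≤ a)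
    (hr0 : 0 ≤ r) (hr1 : r < 1) (n : ℕ) (hx : ∀ m ≤ n, x m ≤ a * r ^ (n - m)) :
    ∑ m ∈ range (n + 1), x m ≤ a / (1 - r) :=
  calc ∑ m ∈ range (n + 1), x m
      ≤ ∑ m ∈ range (n + 1), a * r ^ (n - m) :=
        sum_le_sum fun m hm => hx m (Nat.lt_succ_iff.mp (mem_range.mp hm))
    _ = a * ∑ k ∈ Ico 0 (n + 1), r ^ k := by
        rw [← mul_sum, ← range_eq_Ico, ← sum_range_reflect]
        refine congrArg _ (sum_congr rfl fun j hj => ?_)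
        rw [add_tsub_cancel_right, Nat.sub_sub_self (Nat.lt_succ_iff.mp (mem_range.mp hj))]
    _ ≤ a * (r ^ 0 / (1 - r)) := by gcongr; exact geom_sum_Ico_le_of_lt_one hr0 hr1
    _ = a / (1 - r) := by rw [pow_zero, mul_one_div]

lemma Real.le_rpow_one_div_mul_pow_of_rpow_le {x b q s : ℝ} (hx : 0 ≤ x) (hb : 0 ≤ b)
    (hq : 0 ≤ q) (hs : 0 < s) {k : ℕ} (h : x ^ s ≤ b * q ^ k) :
    x ≤ b ^ (1 / s) * (q ^ (1 / s)) ^ k := by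
  have hbound : 0 ≤ b ^ (1 / s) * (q ^ (1 / s)) ^ k := by positivity
  rwa [← Real.rpow_le_rpow_iff hx hbound hs, Real.mul_rpow (by positivity) (by positivity),
    Real.rpow_pow_comm (by positivity), one_div, Real.rpow_inv_rpow hb hs.ne',
    Real.rpow_inv_rpow (pow_nonneg hq k) hs.ne']

lemma rpow_sum_range_mul_le_of_le_mul_pow_sub {C q s M : ℝ} {η T : ℕ → ℝ} {n : ℕ}
    (hC : 0 ≤ C) (hq0 : 0 ≤ q) (hq1 : q < 1) (hs : 0 < s) (hηn : 0 < η n)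
    (hT : ∀ m, 0 ≤ T m) (hlin : ∀ m ≤ n, η n ≤ C * q ^ (n - m) * η m)
    (hbd : ∀ m ≤ n, T m ^ s * η m ≤ M) :
    (∑ m ∈ range (n + 1), T m) ^ s * η n ≤ C / (1 - q ^ (1 / s)) ^ s * M := by
  set r := q ^ (1 / s)
  have hr0 : 0 ≤ r := Real.rpow_nonneg hq0 _
  have hr1 : r < 1 := Real.rpow_lt_one hq0 hq1 (by positivity)
  have hM : 0 ≤ M := (mul_nonneg (Real.rpow_nonneg (hT n) s) hηn.le).trans (hbd n le_rfl)
  have hterm : ∀ m ≤ n, T m ≤ (C * M / η n) ^ (1 / s) * r ^ (n - m) := by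
    intro m hm
    refine Real.le_rpow_one_div_mul_pow_of_rpow_le (hT m) (by positivity) hq0 hs ?_
    rw [div_mul_eq_mul_div, le_div_iff₀ hηn]
    have := hT m
    calc T m ^ s * η n ≤ T m ^ s * (C * q ^ (n - m) * η m) := by gcongr; exact hlin m hm
      _ = C * q ^ (n - m) * (T m ^ s * η m) := by ring
      _ ≤ C * q ^ (n - m) * M := by gcongr; exact hbd m hm
      _ = C * M * q ^ (n - m) := by ring
  have hsum := sum_range_succ_le_div_one_sub_of_le_mul_pow (by positivity) hr0 hr1 n hterm
  have h1r : 0 < 1 - r := sub_pos.2 hr1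
  calc (∑ m ∈ range (n + 1), T m) ^ s * η n
      ≤ ((C * M / η n) ^ (1 / s) / (1 - r)) ^ s * η n := by
        gcongr
        exact sum_nonneg fun m _ => hT m
    _ = C / (1 - r) ^ s * M := by
        rw [Real.div_rpow (by positivity) h1r.le, one_div, Real.rpow_inv_rpow (by positivity) hs.ne']
        field_simp

/-- Rates with respect to degrees of freedom versus computational cost: under
full R-linear convergence the two rate suprema are equivalent (in `ℝ≥0∞`). -/
theorem rates_dof_iff_cost
    (Clin qlin s : ℝ) (hClin : 0 < Clin) (hq0 : 0 < qlin) (hq1 : qlin < 1)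
    (hs : 0 < s)
    (η T : ℕ → ℝ) (hη : ∀ n, 0 < η n) (hT : ∀ n, 0 < T n)
    (hlin : ∀ m n : ℕ, m ≤ n → η n ≤ Clin * qlin ^ (n - m) * η m) :
    (⨆ n : ℕ, ENNReal.ofReal ((T n) ^ s * η n)) ≤
      (⨆ n : ℕ, ENNReal.ofReal ((∑ m ∈ Finset.range (n + 1), T m) ^ s * η n)) ∧
    (⨆ n : ℕ, ENNReal.ofReal ((∑ m ∈ Finset.range (n + 1), T m) ^ s * η n)) ≤
      ENNReal.ofReal (Clin / (1 - qlin ^ (1 / s)) ^ s) *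
        (⨆ n : ℕ, ENNReal.ofReal ((T n) ^ s * η n)) := by
  have hT0 : ∀ n, 0 ≤ T n := fun n => (hT n).le
  refine ⟨iSup_mono fun n => ENNReal.ofReal_le_ofReal ?_, iSup_le fun n => ?_⟩
  · have hTn : T n ≤ ∑ m ∈ range (n + 1), T m :=
      single_le_sum (fun m _ => hT0 m) (self_mem_range_succ n)
    exact mul_le_mul_of_nonneg_right (Real.rpow_le_rpow (hT0 n) hTn hs.le) (hη n).le
  · obtain ⟨m₀, -, hmax⟩ :=
      (range (n + 1)).exists_max_image (fun m => T m ^ s * η m) nonempty_range_add_one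
    have hK : 0 ≤ Clin / (1 - qlin ^ (1 / s)) ^ s := by
      have := Real.rpow_lt_one hq0.le hq1 (one_div_pos.2 hs)
      exact div_nonneg hClin.le (Real.rpow_nonneg (by linarith) s)
    calc ENNReal.ofReal ((∑ m ∈ range (n + 1), T m) ^ s * η n)
        ≤ ENNReal.ofReal (Clin / (1 - qlin ^ (1 / s)) ^ s * (T m₀ ^ s * η m₀)) :=
          ENNReal.ofReal_le_ofReal <| rpow_sum_range_mul_le_of_le_mul_pow_sub hClin.le hq0.le
            hq1 hs (hη n) hT0 (fun m hm => hlin m n hm)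
            (fun m hm => hmax m (mem_range.2 (Nat.lt_succ_of_le hm)))
      _ = ENNReal.ofReal (Clin / (1 - qlin ^ (1 / s)) ^ s) * ENNReal.ofReal (T m₀ ^ s * η m₀) :=
          ENNReal.ofReal_mul hK
      _ ≤ ENNReal.ofReal (Clin / (1 - qlin ^ (1 / s)) ^ s) *
            ⨆ n : ℕ, ENNReal.ofReal ((T n) ^ s * η n) := by
          gcongr
          exact le_iSup (fun n => ENNReal.ofReal (T n ^ s * η n)) m₀
end

section
/- Let q_alg ∈ (0,1) and suppose nonnegative reals satisfy: e^{k} ≤ q_alg^{k}·e^{0} for the algebraic errors within a mesh level (contraction with nested iteration e^0 = previous final error), and the perturbed estimator reduction η_h(final) ≤ q_θ·η_H(final) + 2·C_stab·|||u⋆_h - u_H(final)||| with 0 < q_θ < 1, C_stab > 0. If additionally γ ∈ (0, (1-q_alg)/(2C_stab)) and q_ctr := max{q_alg + 2C_stab·γ, q_θ}, then the weighted quasi-error Δ_ℓ := |||u⋆_ℓ - u_ℓ(final)||| + γ·η_ℓ(final) satisfies Δ_{ℓ+1} ≤ q_ctr·Δ_ℓ + q_ctr·|||u⋆_{ℓ+1}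 - u⋆_ℓ||| for consecutive mesh levels. -/
/-- Contraction of the quasi-error of final iterates across consecutive mesh
levels. -/
theorem quasi_error_final_iterates_contraction
    {X : Type*} [NormedAddCommGroup X] [InnerProductSpace ℝ X]
    (qalg Cstab qθ γ : ℝ)
    (hqalg0 : 0 < qalg) (hqalg1 : qalg < 1)
    (hCstab : 0 < Cstab) (hqθ0 : 0 < qθ) (hqθ1 : qθ < 1)
    (hγ0 : 0 < γ) (hγ : γ < (1 - qalg) / (2 * Cstab))
    (ustarL ustarL1 uLfin uL1fin : X) (ηH ηh : ℝ)
    (hηH : 0 ≤ ηH) (hηh : 0 ≤ ηh)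
    (kbar : ℕ) (hkbar : 1 ≤ kbar)
    (hcontr : ‖ustarL1 - uL1fin‖ ≤ qalg ^ kbar * ‖ustarL1 - uLfin‖)
    (hest : ηh ≤ qθ * ηH + 2 * Cstab * ‖ustarL1 - uLfin‖) :
    ‖ustarL1 - uL1fin‖ + γ * ηh ≤
      max (qalg + 2 * Cstab * γ) qθ * (‖ustarL - uLfin‖ + γ * ηH) +
      max (qalg + 2 * Cstab * γ) qθ * ‖ustarL1 - ustarL‖ := by
  set q := max (qalg + 2 * Cstab * γ) qθ with hq
  have hq1 : qalg + 2 * Cstab * γ ≤ q := le_max_left _ _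
  have hq2 : qθ ≤ q := le_max_right _ _
  have hpow : qalg ^ kbar ≤ qalg := by
    calc qalg ^ kbar ≤ qalg ^ 1 :=
      pow_le_pow_of_le_one hqalg0.le hqalg1.le hkbar
    _ = qalg := pow_one qalg
  have he : (0:ℝ) ≤ ‖ustarL1 - uLfin‖ := norm_nonneg _
  have hcontr' : ‖ustarL1 - uL1fin‖ ≤ qalg * ‖ustarL1 - uLfin‖ :=
    hcontr.trans (mul_le_mul_of_nonneg_right hpow he)
  have htri : ‖ustarL1 - uLfin‖ ≤ ‖ustarL1 - ustarL‖ + ‖ustarL - uLfin‖ :=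
    norm_sub_le_norm_sub_add_norm_sub _ _ _
  have hqpos : (0:ℝ) ≤ q := le_trans hqθ0.le hq2
  have h1 : (qalg + 2 * Cstab * γ) * ‖ustarL1 - uLfin‖ ≤ q * ‖ustarL1 - uLfin‖ :=
    mul_le_mul_of_nonneg_right hq1 he
  have h2 : qθ * (γ * ηH) ≤ q * (γ * ηH) :=
    mul_le_mul_of_nonneg_right hq2 (mul_nonneg hγ0.le hηH)
  have h3 : q * ‖ustarL1 - uLfin‖ ≤ q * (‖ustarL1 - ustarL‖ + ‖ustarL - uLfin‖) :=
    mul_le_mul_of_nonneg_left htri hqpos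
  have h4 : γ * ηh ≤ γ * (qθ * ηH + 2 * Cstab * ‖ustarL1 - uLfin‖) :=
    mul_le_mul_of_nonneg_left hest hγ0.le
  nlinarith [h1, h2, h3, h4, hcontr']
end

section
/- Let C_rel, C_stab > 0 and 0 < q_alg < 1, λ > 0. Suppose nonnegative reals satisfy: E ≤ C_rel·η⋆ + e (error split with reliability), |η⋆ - η| ≤ C_stab·e (stability), e ≤ (q_alg/(1-q_alg))·δ (algebraic a-posteriori control), where E = |||u⋆ - u^k|||, η⋆ is the estimator at the exact discrete solution, η at the iterate u^k, e the algebraic error, δ = |||u^k - u^{k-1}|||. Then E ≤ C_rel·η + (C_rel·C_stab + 1)·(q_alg/(1-q_alg))·δ. If moreover δ ≤ λ·η (stopping criterion), then E ≤ (C_rel + (C_rel·C_stab + 1)·(q_alg/(1-q_alg))·λ)·η. -/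
/-- A-posteriori control of the overall error. -/
theorem aposteriori_overall_error
    (Crel Cstab qalg lam : ℝ)
    (hCrel : 0 < Crel) (hCstab : 0 < Cstab)
    (hqalg0 : 0 < qalg) (hqalg1 : qalg < 1) (hlam : 0 < lam)
    (E ηstar η e δ : ℝ)
    (hE : 0 ≤ E) (hηstar : 0 ≤ ηstar) (hη : 0 ≤ η) (he : 0 ≤ e) (hδ : 0 ≤ δ)
    (hrel : E ≤ Crel * ηstar + e)
    (hstab : |ηstar - η| ≤ Cstab * e)
    (hapost : e ≤ (qalg / (1 - qalg)) * δ) :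
    E ≤ Crel * η + (Crel * Cstab + 1) * (qalg / (1 - qalg)) * δ ∧
    (δ ≤ lam * η →
      E ≤ (Crel + (Crel * Cstab + 1) * (qalg / (1 - qalg)) * lam) * η) := by
  have habs : ηstar - η ≤ Cstab * e := (abs_le.mp hstab).2
  have hq : 0 ≤ qalg / (1 - qalg) := div_nonneg hqalg0.le (by linarith)
  have h1 : E ≤ Crel * η + (Crel * Cstab + 1) * (qalg / (1 - qalg)) * δ := by
    nlinarith [mul_le_mul_of_nonneg_left hapost (le_of_lt hCrel),
      mul_le_mul_of_nonneg_left habs (le_of_lt hCrel),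
      mul_le_mul_of_nonneg_left hapost (mul_nonneg hCrel.le hCstab.le)]
  refine ⟨h1, fun hstop => ?_⟩
  have hc : 0 ≤ (Crel * Cstab + 1) * (qalg / (1 - qalg)) := mul_nonneg (by nlinarith) hq
  nlinarith [mul_le_mul_of_nonneg_left hstop hc]
end
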